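/- Fix r ≥ 1. Suppose given two families of rational numbers n_{g,β} and n′_{g,β}, indexed by integers g ≥ 0 and nonzero β ∈ ℕ^r, such that for each β only finitely many g have n_{g,β} ≠ 0 and only finitely many g have n′_{g,β} ≠ 0. In the ring of formal power series in v = (v_1,…,v_r) with coefficients in ℚ((q)), form Z = exp( Σ_{γ∈ℕ^r, γ≠0} Σ_{k≥1} Σ_{g≥0} n_{g,γ} · ((−1)^{g−1}/k) · ((−q)^k − 2 + (−q)^{−k})^{g−1} · v^{kγ} ), and likewise Z′ from the family n′. If for every nonzero β ∈ ℕ^r and every integer m ≤ 1 the coefficient of q^m v^β in Z equals the coefficient of q^m v^β in Z′, then n_{g,β} = n′_{g,β} for all g ≥ 0 and all nonzero β, and hence Z = Z′. -/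

import Mathlib

/-!
Induct on `β` for the partial order of `ℕ^r`. In `Z = exp E` the coefficient of `v^β` is that of
`E` plus terms of `E^j`, `j ≥ 2`, which only involve coefficients of `E` at classes `< β`; and in
`E` a summand `v^{kγ}` with `kγ = β`, `k ≥ 2` also has `γ < β`. So once `n` and `n'` agree below
`β`, the coefficients of `q^m v^β` (`m ≤ 1`) of `Z - Z'` are those of
`∑_g (n_{g,β} - n'_{g,β}) (-Φ₁)^{g-1}`, where `-Φ₁ = q⁻¹(1+q)²`. Since `(1+q)²` is a unit of `ℚ⟦q⟧`,
`(-Φ₁)^{g-1}` starts with `q^{1-g}`, and this triangular system forces `n_{g,β} = n'_{g,β}`.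
-/

open HahnSeries

/-- `(−q)^k − 2 + (−q)^{−k}` as a formal Laurent series over `ℚ`. -/
noncomputable def PhiK (k : ℕ) : LaurentSeries ℚ :=
  HahnSeries.single (k : ℤ) ((-1 : ℚ) ^ k) - 2 + HahnSeries.single (-(k : ℤ)) ((-1 : ℚ) ^ k)

/-- The coefficient of `q^m v^β` in the Gopakumar–Vafa exponent
`Σ_{γ ≠ 0} Σ_{k ≥ 1} Σ_{g ≥ 0} n_{g,γ} ((−1)^{g−1}/k) ((−q)^k − 2 + (−q)^{−k})^{g−1} v^{kγ}`. -/
noncomputable def gvExponentCoeff (r : ℕ) (n : ℕ → (Fin r →₀ ℕ) → ℚ)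
    (β : Fin r →₀ ℕ) (m : ℤ) : ℚ :=
  ∑ᶠ g : ℕ, ∑ᶠ k : ℕ, ∑ᶠ γ : Fin r →₀ ℕ,
    if γ ≠ 0 ∧ 1 ≤ k ∧ k • γ = β then
      n g γ * ((-1 : ℚ) ^ ((g : ℤ) - 1) / (k : ℚ)) * ((PhiK k) ^ ((g : ℤ) - 1)).coeff m
    else 0

open PowerSeries

theorem map_val_units_zpow {M G F : Type*} [Monoid M] [DivisionMonoid G] [FunLike F M G]
    [MonoidHomClass F M G] (f : F) (u : Mˣ) (z : ℤ) : f ↑(u ^ z) = f ↑u ^ z := by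
  have h := congrArg Units.val (map_zpow (Units.map (f : M →* G)) u z)
  rwa [Units.val_zpow_eq_zpow_val, Units.coe_map, Units.coe_map] at h

theorem eq_zero_of_sum_mul_eq_zero_of_triangular {R : Type*} [Semiring R] {a : ℤ}
    {c : ℕ → ℤ → R} (hlt : ∀ (g : ℕ) m, m < a - g → c g m = 0)
    (hdiag : ∀ g : ℕ, c g (a - g) = 1)
    {s : Finset ℕ} {D : ℕ → R} (h : ∀ m ≤ a, ∑ g ∈ s, D g * c g m = 0) :
    ∀ g ∈ s, D g = 0 := by
  classical
  by_contra! hne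
  obtain ⟨g, hg, hmax⟩ := (s.filter (D · ≠ 0)).exists_max_image id
    (by simpa [Finset.filter_nonempty_iff] using hne)
  rw [Finset.mem_filter] at hg
  have hsum := h (a - g) (by omega)
  rw [Finset.sum_eq_single_of_mem g hg.1, hdiag, mul_one] at hsum
  · exact hg.2 hsum
  intro g' hg's hg'
  rcases lt_or_gt_of_ne hg' with hlt' | hgt
  · rw [hlt g' _ (by omega), mul_zero]
  · by_contra h'
    exact absurd (hmax g' (Finset.mem_filter.2 ⟨hg's, left_ne_zero_of_mul h'⟩)) (not_le.2 hgt)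

namespace MvPowerSeries

variable {σ R : Type*} [CommRing R]

theorem coeff_mul_eq_zero_of_lt {S D : MvPowerSeries σ R} {β : σ →₀ ℕ}
    (hS : constantCoeff S = 0) (hD : ∀ γ < β, coeff γ D = 0) : coeff β (S * D) = 0 := by
  classical
  rw [coeff_mul]
  refine Finset.sum_eq_zero fun ⟨a, b⟩ hab => ?_
  rw [Finset.HasAntidiagonal.mem_antidiagonal] at hab
  rcases eq_or_ne a 0 with rfl | ha
  · rw [coeff_zero_eq_constantCoeff_apply, hS, zero_mul]
  · rw [hD b (hab ▸ lt_add_of_pos_left b (pos_iff_ne_zero.2 ha)), mul_zero]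

theorem coeff_pow_eq_of_ne_one {E E' : MvPowerSeries σ R} {β : σ →₀ ℕ}
    (hE : constantCoeff E = 0) (hE' : constantCoeff E' = 0)
    (h : ∀ γ < β, coeff γ E = coeff γ E') {j : ℕ} (hj : j ≠ 1) :
    coeff β (E ^ j) = coeff β (E' ^ j) := by
  obtain rfl | hj2 : j = 0 ∨ 2 ≤ j := by omega
  · rfl
  rw [← sub_eq_zero, ← map_sub, ← geom_sum₂_mul]
  refine coeff_mul_eq_zero_of_lt ?_ fun γ hγ => by rw [map_sub, h γ hγ, sub_self]
  rw [map_sum]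
  refine Finset.sum_eq_zero fun i hi => ?_
  rw [Finset.mem_range] at hi
  rcases Nat.eq_zero_or_pos i with rfl | hi0
  · rw [map_mul, map_pow, map_pow, hE', zero_pow (by omega), mul_zero]
  · rw [map_mul, map_pow, hE, zero_pow hi0.ne', zero_mul]

theorem coeff_pow_eq_zero_of_degree_lt {E : MvPowerSeries σ R} (hE : constantCoeff E = 0)
    {β : σ →₀ ℕ} {j : ℕ} (h : β.degree < j) : coeff β (E ^ j) = 0 :=
  coeff_of_lt_order ((Nat.cast_lt.2 h).trans_le (le_order_pow_of_constantCoeff_eq_zero j hE))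

end MvPowerSeries

open MvPowerSeries in
theorem finsum_inv_factorial_mul_coeff_pow_sub {σ K : Type*} [Field K]
    {E E' : MvPowerSeries σ (LaurentSeries K)} {β : σ →₀ ℕ}
    (hE : constantCoeff E = 0) (hE' : constantCoeff E' = 0)
    (h : ∀ γ < β, coeff γ E = coeff γ E') (m : ℤ) :
    ∑ᶠ j : ℕ, ((j.factorial : K))⁻¹ * (coeff β (E ^ j)).coeff m -
        ∑ᶠ j : ℕ, ((j.factorial : K))⁻¹ * (coeff β (E' ^ j)).coeff m =
      (coeff β E).coeff m - (coeff β E').coeff m := by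
  have hfin : ∀ F : MvPowerSeries σ (LaurentSeries K), constantCoeff F = 0 →
      (Function.support fun j : ℕ => ((j.factorial : K))⁻¹ * (coeff β (F ^ j)).coeff m).Finite :=
    fun F hF => (Set.finite_Iic β.degree).subset fun j hj =>
      Set.mem_Iic.2 <| not_lt.1 fun hlt => hj (by simp [coeff_pow_eq_zero_of_degree_lt hF hlt])
  rw [← finsum_sub_distrib (hfin E hE) (hfin E' hE'),
    finsum_eq_single _ 1 fun j hj => by rw [coeff_pow_eq_of_ne_one hE hE' h hj, sub_self]]
  simp

theorem Finsupp.le_degree_nsmul {σ : Type*} (k : ℕ) {γ : σ →₀ ℕ} (hγ : γ ≠ 0) :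
    k ≤ (k • γ).degree := by
  rw [map_nsmul, smul_eq_mul]
  exact Nat.le_mul_of_pos_right k (Nat.pos_of_ne_zero ((Finsupp.degree_eq_zero_iff γ).not.2 hγ))

theorem neg_PhiK_one :
    -PhiK 1 = single (-1 : ℤ) 1 * ofPowerSeries ℤ ℚ ((1 + X) ^ 2) := by
  have hq : single (1 : ℤ) (1 : ℚ) ≠ 0 := by simp
  simp only [PhiK, RatFunc.single_zpow (-1), zpow_neg_one, map_pow, map_add, map_one,
    ofPowerSeries_X, Nat.cast_one, pow_one, single_neg]
  field_simp
  ring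

theorem exists_neg_PhiK_one_zpow_eq (z : ℤ) :
    ∃ Q : PowerSeries ℚ, constantCoeff Q = 1 ∧
      (-PhiK 1) ^ z = single (-z) 1 * ofPowerSeries ℤ ℚ Q := by
  have hu : IsUnit ((1 + X) ^ 2 : PowerSeries ℚ) := isUnit_iff_constantCoeff.2 (by simp)
  refine ⟨↑(hu.unit ^ z), ?_, ?_⟩
  · rw [map_val_units_zpow, IsUnit.unit_spec]
    simp
  · rw [map_val_units_zpow, IsUnit.unit_spec, neg_PhiK_one, mul_zpow,
      RatFunc.single_zpow (-1), RatFunc.single_zpow (-z), ← zpow_mul, neg_one_mul]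

theorem coeff_neg_PhiK_one_zpow_of_lt {z m : ℤ} (h : m < -z) : ((-PhiK 1) ^ z).coeff m = 0 := by
  obtain ⟨Q, -, hQ⟩ := exists_neg_PhiK_one_zpow_eq z
  rw [hQ, ← sub_add_cancel m (-z), coeff_single_mul_add, PowerSeries.coeff_coe,
    if_pos (by omega), mul_zero]

theorem coeff_neg_PhiK_one_zpow_neg (z : ℤ) : ((-PhiK 1) ^ z).coeff (-z) = 1 := by
  obtain ⟨Q, hQ1, hQ⟩ := exists_neg_PhiK_one_zpow_eq z
  have hlead := coeff_single_mul_add (r := (1 : ℚ)) (x := ofPowerSeries ℤ ℚ Q) (a := 0) (b := -z)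
  rw [zero_add] at hlead
  rw [hQ, hlead, PowerSeries.coeff_coe, if_neg (lt_irrefl 0)]
  simpa using hQ1

theorem neg_one_zpow_mul_coeff_zpow {K : Type*} [Field K] (x : LaurentSeries K) (z m : ℤ) :
    (-1 : K) ^ z * (x ^ z).coeff m = ((-x) ^ z).coeff m := by
  rw [neg_eq_neg_one_mul x, mul_zpow, ← map_one (C : K →+* LaurentSeries K), ← map_neg,
    ← map_zpow₀, C_mul_eq_smul, HahnSeries.coeff_smul, smul_eq_mul]

section GopakumarVafa

variable {r : ℕ} (n n' : ℕ → (Fin r →₀ ℕ) → ℚ)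

noncomputable def gvTerm (g k : ℕ) (γ β : Fin r →₀ ℕ) (m : ℤ) : ℚ :=
  if γ ≠ 0 ∧ 1 ≤ k ∧ k • γ = β then
    n g γ * ((-1 : ℚ) ^ ((g : ℤ) - 1) / (k : ℚ)) * ((PhiK k) ^ ((g : ℤ) - 1)).coeff m
  else 0

variable {β : Fin r →₀ ℕ} {m : ℤ}

theorem gvExponentCoeff_eq_finsum :
    gvExponentCoeff r n β m = ∑ᶠ (g) (k) (γ), gvTerm n g k γ β m := rfl

variable {n n'}

theorem of_gvTerm_ne_zero {g k : ℕ} {γ : Fin r →₀ ℕ} (h : gvTerm n g k γ β m ≠ 0) :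
    γ ≠ 0 ∧ 1 ≤ k ∧ k • γ = β ∧ n g γ ≠ 0 := by
  unfold gvTerm at h
  split_ifs at h with hc
  · exact ⟨hc.1, hc.2.1, hc.2.2, left_ne_zero_of_mul (left_ne_zero_of_mul h)⟩
  · exact absurd rfl h

theorem gvExponentCoeff_eq_sum {G : ℕ} (hG : ∀ g ≥ G, ∀ γ ≤ β, γ ≠ 0 → n g γ = 0) :
    gvExponentCoeff r n β m =
      ∑ g ∈ Finset.range G, ∑ k ∈ Finset.Icc 1 β.degree, ∑ γ ∈ Finset.Iic β,
        gvTerm n g k γ β m := by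
  have hγ (g k : ℕ) : ∑ᶠ γ, gvTerm n g k γ β m = ∑ γ ∈ Finset.Iic β, gvTerm n g k γ β m :=
    finsum_eq_sum_of_support_subset _ fun γ hγ => by
      obtain ⟨-, hk, rfl, -⟩ := of_gvTerm_ne_zero hγ
      simpa using le_self_nsmul zero_le (by omega : k ≠ 0)
  have hk (g : ℕ) : ∑ᶠ k, ∑ γ ∈ Finset.Iic β, gvTerm n g k γ β m =
      ∑ k ∈ Finset.Icc 1 β.degree, ∑ γ ∈ Finset.Iic β, gvTerm n g k γ β m :=
    finsum_eq_sum_of_support_subset _ fun k hk => by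
      obtain ⟨γ, -, hγ⟩ := Finset.exists_ne_zero_of_sum_ne_zero hk
      obtain ⟨hγ0, hk1, rfl, -⟩ := of_gvTerm_ne_zero hγ
      exact Finset.mem_Icc.2 ⟨hk1, Finsupp.le_degree_nsmul k hγ0⟩
  simp_rw [gvExponentCoeff_eq_finsum, hγ, hk]
  refine finsum_eq_sum_of_support_subset _ fun g hg => ?_
  obtain ⟨k, -, hk⟩ := Finset.exists_ne_zero_of_sum_ne_zero hg
  obtain ⟨γ, -, hγ⟩ := Finset.exists_ne_zero_of_sum_ne_zero hk
  obtain ⟨hγ0, hk1, hkγ, hn⟩ := of_gvTerm_ne_zero hγ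
  simpa using not_le.1 fun hGg => hn (hG g hGg γ (hkγ ▸ le_self_nsmul zero_le (by omega)) hγ0)

theorem gvTerm_sub_gvTerm (hβ : β ≠ 0) (hlt : ∀ g, ∀ γ < β, γ ≠ 0 → n g γ = n' g γ)
    (g k : ℕ) (γ : Fin r →₀ ℕ) :
    gvTerm n g k γ β m - gvTerm n' g k γ β m =
      if k = 1 ∧ γ = β then (n g β - n' g β) * ((-PhiK 1) ^ ((g : ℤ) - 1)).coeff m else 0 := by
  unfold gvTerm
  by_cases hc : γ ≠ 0 ∧ 1 ≤ k ∧ k • γ = β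
  · obtain ⟨hγ0, hk, rfl⟩ := hc
    rw [if_pos ⟨hγ0, hk, rfl⟩, if_pos ⟨hγ0, hk, rfl⟩]
    obtain rfl | hk1 := eq_or_ne k 1
    · rw [one_smul, if_pos ⟨rfl, rfl⟩, ← neg_one_zpow_mul_coeff_zpow]
      push_cast
      ring
    · have hlt' : γ < k • γ := by
        simpa using nsmul_lt_nsmul_left (pos_iff_ne_zero.2 hγ0) (by omega : 1 < k)
      rw [hlt g γ hlt' hγ0, sub_self, if_neg fun h => hk1 h.1]
  · rw [if_neg hc, if_neg hc, sub_self, if_neg]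
    rintro ⟨rfl, rfl⟩
    exact hc ⟨hβ, le_rfl, one_smul ℕ γ⟩

theorem gvExponentCoeff_sub_gvExponentCoeff (hβ : β ≠ 0) {G : ℕ}
    (hG : ∀ g ≥ G, ∀ γ ≤ β, γ ≠ 0 → n g γ = 0) (hG' : ∀ g ≥ G, ∀ γ ≤ β, γ ≠ 0 → n' g γ = 0)
    (hlt : ∀ g, ∀ γ < β, γ ≠ 0 → n g γ = n' g γ) :
    gvExponentCoeff r n β m - gvExponentCoeff r n' β m =
      ∑ g ∈ Finset.range G, (n g β - n' g β) * ((-PhiK 1) ^ ((g : ℤ) - 1)).coeff m := by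
  have hdeg : 1 ≤ β.degree := Nat.one_le_iff_ne_zero.2 ((Finsupp.degree_eq_zero_iff β).not.2 hβ)
  simp only [gvExponentCoeff_eq_sum hG, gvExponentCoeff_eq_sum hG', ← Finset.sum_sub_distrib,
    gvTerm_sub_gvTerm hβ hlt, ite_and]
  simp [Finset.sum_ite_eq', hdeg]

theorem gvExponentCoeff_zero : gvExponentCoeff r n 0 m = 0 := by
  simpa using gvExponentCoeff_eq_sum (n := n) (β := 0) (m := m) (G := 0)
    fun _ _ γ hγ hγ0 => absurd (le_zero_iff.1 hγ) hγ0

theorem gvExponentCoeff_congr (h : ∀ g, ∀ γ ≤ β, γ ≠ 0 → n g γ = n' g γ) :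
    gvExponentCoeff r n β m = gvExponentCoeff r n' β m := by
  refine finsum_congr fun g => finsum_congr fun k => finsum_congr fun γ => ?_
  split_ifs with hc
  · rw [h g γ (hc.2.2 ▸ le_self_nsmul zero_le (by omega)) hc.1]
  · rfl

theorem eventually_atTop_forall_le_eq_zero
    (hvan : ∀ β : Fin r →₀ ℕ, β ≠ 0 → ∃ G : ℕ, ∀ g : ℕ, G ≤ g → n g β = 0) (β : Fin r →₀ ℕ) :
    ∀ᶠ g in Filter.atTop, ∀ γ ≤ β, γ ≠ 0 → n g γ = 0 := by
  have h (γ) (_ : γ ∈ Finset.Iic β) : ∀ᶠ g in Filter.atTop, γ ≠ 0 → n g γ = 0 := by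
    obtain rfl | hγ := eq_or_ne γ 0
    · simp
    · exact (Filter.eventually_atTop.2 (hvan γ hγ)).mono fun g hg _ => hg
  simpa using (Filter.eventually_all_finset _).2 h

theorem eq_of_gvExponentCoeff_eq_of_le_one (hβ : β ≠ 0)
    (hvan : ∀ᶠ g in Filter.atTop, ∀ γ ≤ β, γ ≠ 0 → n g γ = 0)
    (hvan' : ∀ᶠ g in Filter.atTop, ∀ γ ≤ β, γ ≠ 0 → n' g γ = 0)
    (hlt : ∀ g, ∀ γ < β, γ ≠ 0 → n g γ = n' g γ)
    (hlow : ∀ m ≤ 1, gvExponentCoeff r n β m = gvExponentCoeff r n' β m) (g : ℕ) :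
    n g β = n' g β := by
  obtain ⟨G, hG⟩ := Filter.eventually_atTop.1 (hvan.and hvan')
  have hD := eq_zero_of_sum_mul_eq_zero_of_triangular (a := 1) (s := Finset.range G)
    (c := fun g m => ((-PhiK 1) ^ ((g : ℤ) - 1)).coeff m) (D := fun g => n g β - n' g β)
    (fun g m hm => coeff_neg_PhiK_one_zpow_of_lt (by omega))
    (fun g => by simpa using coeff_neg_PhiK_one_zpow_neg ((g : ℤ) - 1))
    fun m hm => by
      rw [← gvExponentCoeff_sub_gvExponentCoeff hβ (fun g hg => (hG g hg).1)
        (fun g hg => (hG g hg).2) hlt, hlow m hm, sub_self]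
  rcases lt_or_ge g G with hg | hg
  · exact sub_eq_zero.1 (hD g (Finset.mem_range.2 hg))
  · rw [(hG g hg).1 β le_rfl hβ, (hG g hg).2 β le_rfl hβ]

end GopakumarVafa

theorem partition_function_determined_by_low_invariants_general (r : ℕ)
    (n n' : ℕ → (Fin r →₀ ℕ) → ℚ)
    (hvan : ∀ β : Fin r →₀ ℕ, β ≠ 0 → ∃ G : ℕ, ∀ g : ℕ, G ≤ g → n g β = 0)
    (hvan' : ∀ β : Fin r →₀ ℕ, β ≠ 0 → ∃ G : ℕ, ∀ g : ℕ, G ≤ g → n' g β = 0)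
    (E E' Z Z' : MvPowerSeries (Fin r) (LaurentSeries ℚ))
    (hE : ∀ (β : Fin r →₀ ℕ) (m : ℤ),
      (MvPowerSeries.coeff β E).coeff m = gvExponentCoeff r n β m)
    (hE' : ∀ (β : Fin r →₀ ℕ) (m : ℤ),
      (MvPowerSeries.coeff β E').coeff m = gvExponentCoeff r n' β m)
    (hZ : ∀ (β : Fin r →₀ ℕ) (m : ℤ),
      (MvPowerSeries.coeff β Z).coeff m =
        ∑ᶠ j : ℕ, ((j.factorial : ℚ))⁻¹ *
          (MvPowerSeries.coeff β (E ^ j)).coeff m)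
    (hZ' : ∀ (β : Fin r →₀ ℕ) (m : ℤ),
      (MvPowerSeries.coeff β Z').coeff m =
        ∑ᶠ j : ℕ, ((j.factorial : ℚ))⁻¹ *
          (MvPowerSeries.coeff β (E' ^ j)).coeff m)
    (hlow : ∀ (β : Fin r →₀ ℕ), β ≠ 0 → ∀ m : ℤ, m ≤ 1 →
      (MvPowerSeries.coeff β Z).coeff m =
        (MvPowerSeries.coeff β Z').coeff m) :
    (∀ (g : ℕ) (β : Fin r →₀ ℕ), β ≠ 0 → n g β = n' g β) ∧ Z = Z' := by
  have hE0 : MvPowerSeries.constantCoeff E = 0 := by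
    ext m; simpa [gvExponentCoeff_zero] using hE 0 m
  have hE0' : MvPowerSeries.constantCoeff E' = 0 := by
    ext m; simpa [gvExponentCoeff_zero] using hE' 0 m
  have hn_eq (β : Fin r →₀ ℕ) : β ≠ 0 → ∀ g, n g β = n' g β := by
    induction β using WellFoundedLT.induction with
    | _ β ih =>
      intro hβ
      have hEE (γ) (hγ : γ < β) : MvPowerSeries.coeff γ E = MvPowerSeries.coeff γ E' := by
        ext m
        rw [hE, hE']
        exact gvExponentCoeff_congr fun g γ' hγ' hγ'0 => ih γ' (hγ'.trans_lt hγ) hγ'0 g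
      refine eq_of_gvExponentCoeff_eq_of_le_one hβ (eventually_atTop_forall_le_eq_zero hvan β)
        (eventually_atTop_forall_le_eq_zero hvan' β) (fun g γ hγ hγ0 => ih γ hγ hγ0 g)
        fun m hm => ?_
      have hexp := finsum_inv_factorial_mul_coeff_pow_sub hE0 hE0' hEE m
      rw [← hZ, ← hZ', hlow β hβ m hm, sub_self, hE, hE', eq_comm, sub_eq_zero] at hexp
      exact hexp
  have hEE : E = E' := by
    ext β m
    rw [hE, hE']
    exact gvExponentCoeff_congr fun g γ _ hγ0 => hn_eq γ hγ0 g
  refine ⟨fun g β hβ => hn_eq β hβ g, ?_⟩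
  ext β m
  rw [hZ, hZ', hEE]

/-- **Lemma* 3.7** of Pandharipande–Thomas, "Curve counting via stable pairs in the derived
category".  Fix `r ≥ 1` and two families `n, n′` of rational numbers indexed by `g ≥ 0` and
nonzero `β ∈ ℕ^r`, each vanishing for `g` sufficiently large (for each fixed `β`).  Let `Z`
(resp. `Z′`) be the exponential `Σ_j E^j/j!` of the corresponding Gopakumar–Vafa exponent `E`
(resp. `E′`).  If for every nonzero `β` and every `m ≤ 1` the coefficient of `q^m v^β` in `Z`
equals that in `Z′`, then `n = n′` on nonzero classes and `Z = Z′`: the partition function is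
uniquely determined by the invariants `P_{n,β}` with `n ≤ 1`. -/
theorem partition_function_determined_by_low_invariants (r : ℕ) (hr : 1 ≤ r)
    (n n' : ℕ → (Fin r →₀ ℕ) → ℚ)
    (hvan : ∀ β : Fin r →₀ ℕ, β ≠ 0 → ∃ G : ℕ, ∀ g : ℕ, G ≤ g → n g β = 0)
    (hvan' : ∀ β : Fin r →₀ ℕ, β ≠ 0 → ∃ G : ℕ, ∀ g : ℕ, G ≤ g → n' g β = 0)
    (E E' Z Z' : MvPowerSeries (Fin r) (LaurentSeries ℚ))
    (hE : ∀ (β : Fin r →₀ ℕ) (m : ℤ),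
      (MvPowerSeries.coeff β E).coeff m = gvExponentCoeff r n β m)
    (hE' : ∀ (β : Fin r →₀ ℕ) (m : ℤ),
      (MvPowerSeries.coeff β E').coeff m = gvExponentCoeff r n' β m)
    (hZ : ∀ (β : Fin r →₀ ℕ) (m : ℤ),
      (MvPowerSeries.coeff β Z).coeff m =
        ∑ᶠ j : ℕ, ((j.factorial : ℚ))⁻¹ *
          (MvPowerSeries.coeff β (E ^ j)).coeff m)
    (hZ' : ∀ (β : Fin r →₀ ℕ) (m : ℤ),
      (MvPowerSeries.coeff β Z').coeff m =
        ∑ᶠ j : ℕ, ((j.factorial : ℚ))⁻¹ *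
          (MvPowerSeries.coeff β (E' ^ j)).coeff m)
    (hlow : ∀ (β : Fin r →₀ ℕ), β ≠ 0 → ∀ m : ℤ, m ≤ 1 →
      (MvPowerSeries.coeff β Z).coeff m =
        (MvPowerSeries.coeff β Z').coeff m) :
    (∀ (g : ℕ) (β : Fin r →₀ ℕ), β ≠ 0 → n g β = n' g β) ∧ Z = Z' :=
  partition_function_determined_by_low_invariants_general r n n' hvan hvan' E E' Z Z' hE hE' hZ hZ'
    hlow
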